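/- Let H̃ = p₁² + p₂² + (a·q₁^(-2/3) + b)·q₂ on q₁ > 0 and Z̃₄ = p₁⁴ + 2a·p₁(p₁q₂ - 3p₂q₁)·q₁^(-2/3) - (9ab/4)·q₁^(4/3) - (a²/2)(9q₁² - 2q₂²)·q₁^(-4/3). Then {H̃, Z̃₄} = 0. -/

import Mathlib

/-!
Every partial derivative of `Ht` and `Z4` is a polynomial in `q₂, p₁, p₂, q₁, q₁⁻¹` and
`t = q₁^(-2/3)`, because `d/dq₁ q₁^r = r q₁^r / q₁`, `q₁^(4/3) = q₁² t` and
`q₁^(-4/3) = t²`. Substituted into the bracket, they leave a rational identity in `q₁` and `t`.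
-/

noncomputable def pb (F G : ℝ → ℝ → ℝ → ℝ → ℝ) (q1 q2 p1 p2 : ℝ) : ℝ :=
  deriv (fun x => F x q2 p1 p2) q1 * deriv (fun x => G q1 q2 x p2) p1
  + deriv (fun x => F q1 x p1 p2) q2 * deriv (fun x => G q1 q2 p1 x) p2
  - deriv (fun x => F q1 q2 x p2) p1 * deriv (fun x => G x q2 p1 p2) q1
  - deriv (fun x => F q1 q2 p1 x) p2 * deriv (fun x => G q1 x p1 p2) q2

noncomputable def Ht (a b : ℝ) (q1 q2 p1 p2 : ℝ) : ℝ :=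
  p1 ^ 2 + p2 ^ 2 + (a * q1 ^ (-(2 : ℝ) / 3) + b) * q2

noncomputable def Z4 (a b : ℝ) (q1 q2 p1 p2 : ℝ) : ℝ :=
  p1 ^ 4 + 2 * a * p1 * (p1 * q2 - 3 * p2 * q1) * q1 ^ (-(2 : ℝ) / 3)
  - (9 * a * b / 4) * q1 ^ ((4 : ℝ) / 3)
  - (a ^ 2 / 2) * (9 * q1 ^ 2 - 2 * q2 ^ 2) * q1 ^ (-(4 : ℝ) / 3)

open Real

lemma pb_eq_of_hasDerivAt {F G : ℝ → ℝ → ℝ → ℝ → ℝ} {q1 q2 p1 p2 : ℝ}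
    {Fq1 Fq2 Fp1 Fp2 Gq1 Gq2 Gp1 Gp2 : ℝ}
    (hFq1 : HasDerivAt (fun x => F x q2 p1 p2) Fq1 q1)
    (hFq2 : HasDerivAt (fun x => F q1 x p1 p2) Fq2 q2)
    (hFp1 : HasDerivAt (fun x => F q1 q2 x p2) Fp1 p1)
    (hFp2 : HasDerivAt (fun x => F q1 q2 p1 x) Fp2 p2)
    (hGq1 : HasDerivAt (fun x => G x q2 p1 p2) Gq1 q1)
    (hGq2 : HasDerivAt (fun x => G q1 x p1 p2) Gq2 q2)
    (hGp1 : HasDerivAt (fun x => G q1 q2 x p2) Gp1 p1)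
    (hGp2 : HasDerivAt (fun x => G q1 q2 p1 x) Gp2 p2) :
    pb F G q1 q2 p1 p2 = Fq1 * Gp1 + Fq2 * Gp2 - Fp1 * Gq1 - Fp2 * Gq2 := by
  rw [pb, hFq1.deriv, hFq2.deriv, hFp1.deriv, hFp2.deriv, hGq1.deriv, hGq2.deriv, hGp1.deriv,
    hGp2.deriv]

lemma hasDerivAt_rpow_const_of_pos {x : ℝ} (hx : 0 < x) (r : ℝ) :
    HasDerivAt (fun y => y ^ r) (r * x ^ r / x) x :=
  (hasDerivAt_rpow_const (Or.inl hx.ne')).congr_deriv (by rw [rpow_sub_one hx.ne']; ring)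

lemma rpow_four_div_three {x : ℝ} (hx : 0 < x) :
    x ^ ((4 : ℝ) / 3) = x ^ 2 * x ^ (-(2 : ℝ) / 3) := by
  rw [← rpow_natCast, ← rpow_add hx]
  norm_num

lemma rpow_neg_four_div_three {x : ℝ} (hx : 0 ≤ x) :
    x ^ (-(4 : ℝ) / 3) = (x ^ (-(2 : ℝ) / 3)) ^ 2 := by
  rw [← rpow_natCast, ← rpow_mul hx]
  norm_num

section Partials

variable {a b q1 q2 p1 p2 : ℝ}

lemma hasDerivAt_Ht_q1 (hq1 : 0 < q1) :
    HasDerivAt (fun x => Ht a b x q2 p1 p2) (-(2 / 3) * a * q2 * q1 ^ (-(2 : ℝ) / 3) / q1) q1 :=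
  (((((hasDerivAt_rpow_const_of_pos hq1 (-(2 : ℝ) / 3)).const_mul a).add_const b).mul_const
    q2).const_add (p1 ^ 2 + p2 ^ 2)).congr_deriv (by ring)

lemma hasDerivAt_Ht_q2 :
    HasDerivAt (fun x => Ht a b q1 x p1 p2) (a * q1 ^ (-(2 : ℝ) / 3) + b) q2 :=
  (((hasDerivAt_id' q2).const_mul (a * q1 ^ (-(2 : ℝ) / 3) + b)).const_add
    (p1 ^ 2 + p2 ^ 2)).congr_deriv (mul_one _)

lemma hasDerivAt_Ht_p1 : HasDerivAt (fun x => Ht a b q1 q2 x p2) (2 * p1) p1 :=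
  (((hasDerivAt_pow 2 p1).add_const (p2 ^ 2)).add_const
    ((a * q1 ^ (-(2 : ℝ) / 3) + b) * q2)).congr_deriv (by ring)

lemma hasDerivAt_Ht_p2 : HasDerivAt (fun x => Ht a b q1 q2 p1 x) (2 * p2) p2 :=
  (((hasDerivAt_pow 2 p2).const_add (p1 ^ 2)).add_const
    ((a * q1 ^ (-(2 : ℝ) / 3) + b) * q2)).congr_deriv (by ring)

lemma hasDerivAt_Z4_q1 (hq1 : 0 < q1) :
    HasDerivAt (fun x => Z4 a b x q2 p1 p2)
      (-2 * a * p1 * p2 * q1 ^ (-(2 : ℝ) / 3)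
        - 4 / 3 * a * p1 ^ 2 * q2 * q1 ^ (-(2 : ℝ) / 3) / q1
        - 3 * a * b * q1 * q1 ^ (-(2 : ℝ) / 3)
        - 3 * a ^ 2 * q1 * (q1 ^ (-(2 : ℝ) / 3)) ^ 2
        - 4 / 3 * a ^ 2 * q2 ^ 2 * (q1 ^ (-(2 : ℝ) / 3)) ^ 2 / q1) q1 := by
  have hlin : HasDerivAt (fun x => 2 * a * p1 * (p1 * q2 - 3 * p2 * x))
      (-6 * a * p1 * p2) q1 :=
    ((((hasDerivAt_id' q1).const_mul (3 * p2)).const_sub (p1 * q2)).const_mul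
      (2 * a * p1)).congr_deriv (by ring)
  have hquad : HasDerivAt (fun x => a ^ 2 / 2 * (9 * x ^ 2 - 2 * q2 ^ 2)) (9 * a ^ 2 * q1) q1 :=
    ((((hasDerivAt_pow 2 q1).const_mul 9).sub_const (2 * q2 ^ 2)).const_mul
      (a ^ 2 / 2)).congr_deriv (by ring)
  refine ((((hlin.mul (hasDerivAt_rpow_const_of_pos hq1 _)).const_add (p1 ^ 4)).sub
    ((hasDerivAt_rpow_const_of_pos hq1 _).const_mul (9 * a * b / 4))).sub
    (hquad.mul (hasDerivAt_rpow_const_of_pos hq1 _))).congr_deriv ?_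
  rw [rpow_four_div_three hq1, rpow_neg_four_div_three hq1.le]
  field_simp
  ring

lemma hasDerivAt_Z4_q2 (hq1 : 0 ≤ q1) :
    HasDerivAt (fun x => Z4 a b q1 x p1 p2)
      (2 * a * p1 ^ 2 * q1 ^ (-(2 : ℝ) / 3) + 2 * a ^ 2 * q2 * (q1 ^ (-(2 : ℝ) / 3)) ^ 2)
      q2 := by
  have hlin : HasDerivAt (fun x => 2 * a * p1 * (p1 * x - 3 * p2 * q1)) (2 * a * p1 ^ 2) q2 :=
    ((((hasDerivAt_id' q2).const_mul p1).sub_const (3 * p2 * q1)).const_mul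
      (2 * a * p1)).congr_deriv (by ring)
  have hquad : HasDerivAt (fun x => a ^ 2 / 2 * (9 * q1 ^ 2 - 2 * x ^ 2)) (-2 * a ^ 2 * q2) q2 :=
    ((((hasDerivAt_pow 2 q2).const_mul 2).const_sub (9 * q1 ^ 2)).const_mul
      (a ^ 2 / 2)).congr_deriv (by ring)
  refine ((((hlin.mul_const (q1 ^ (-(2 : ℝ) / 3))).const_add (p1 ^ 4)).sub_const
    (9 * a * b / 4 * q1 ^ ((4 : ℝ) / 3))).sub
    (hquad.mul_const (q1 ^ (-(4 : ℝ) / 3)))).congr_deriv ?_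
  rw [rpow_neg_four_div_three hq1]
  ring

lemma hasDerivAt_Z4_p1 :
    HasDerivAt (fun x => Z4 a b q1 q2 x p2)
      (4 * p1 ^ 3 + 2 * a * (2 * p1 * q2 - 3 * p2 * q1) * q1 ^ (-(2 : ℝ) / 3)) p1 := by
  have hquad : HasDerivAt (fun x => 2 * a * x * (x * q2 - 3 * p2 * q1))
      (2 * a * (2 * p1 * q2 - 3 * p2 * q1)) p1 :=
    (((hasDerivAt_id' p1).const_mul (2 * a)).mul
      (((hasDerivAt_id' p1).mul_const q2).sub_const (3 * p2 * q1))).congr_deriv (by ring)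
  refine ((((hasDerivAt_pow 4 p1).add (hquad.mul_const (q1 ^ (-(2 : ℝ) / 3)))).sub_const
    (9 * a * b / 4 * q1 ^ ((4 : ℝ) / 3))).sub_const
    (a ^ 2 / 2 * (9 * q1 ^ 2 - 2 * q2 ^ 2) * q1 ^ (-(4 : ℝ) / 3))).congr_deriv ?_
  push_cast
  ring

lemma hasDerivAt_Z4_p2 :
    HasDerivAt (fun x => Z4 a b q1 q2 p1 x) (-6 * a * p1 * q1 * q1 ^ (-(2 : ℝ) / 3)) p2 := by
  have hlin : HasDerivAt (fun x => 2 * a * p1 * (p1 * q2 - 3 * x * q1)) (-6 * a * p1 * q1) p2 :=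
    (((((hasDerivAt_id' p2).const_mul 3).mul_const q1).const_sub (p1 * q2)).const_mul
      (2 * a * p1)).congr_deriv (by ring)
  exact (((hlin.mul_const (q1 ^ (-(2 : ℝ) / 3))).const_add (p1 ^ 4)).sub_const
    (9 * a * b / 4 * q1 ^ ((4 : ℝ) / 3))).sub_const
    (a ^ 2 / 2 * (9 * q1 ^ 2 - 2 * q2 ^ 2) * q1 ^ (-(4 : ℝ) / 3))

end Partials

theorem stmt5 (a b : ℝ) (q1 q2 p1 p2 : ℝ) (hq1 : 0 < q1) :
    pb (Ht a b) (Z4 a b) q1 q2 p1 p2 = 0 := by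
  rw [pb_eq_of_hasDerivAt (hasDerivAt_Ht_q1 hq1) hasDerivAt_Ht_q2 hasDerivAt_Ht_p1
    hasDerivAt_Ht_p2 (hasDerivAt_Z4_q1 hq1) (hasDerivAt_Z4_q2 hq1.le) hasDerivAt_Z4_p1
    hasDerivAt_Z4_p2]
  field_simp
  ring
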